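/- Let X = (X, T, μ_X) and Z = (Z, R, μ_Z) be G systems, and let n ↦ X_n = (X_n, T_n, μ_{X_n}) be a sequence of G systems with factor maps π_n : X → X_n such that the σ-algebras σ(π_n) are increasing up to μ_X-null sets and their union generates the Borel σ-algebra of X up to μ_X-null sets (i.e., X is the inverse limit of the systems X_n). If each X_n is quasi-disjoint from Z, then X is quasi-disjoint from Z. -/

import Mathlib

open MeasureTheory Filter Topology

section Defs

variable {G : Type*} [Group G] {X Y : Type*} [MeasurableSpace X] [MeasurableSpace Y]

/-- A joining of two `G` systems: a probability measure on the product which is invariant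
under the diagonal action and has the two given measures as marginals. -/
def IsJoining (T : G → X → X) (S : G → Y → Y) (μX : Measure X) (μY : Measure Y)
    (ν : Measure (X × Y)) : Prop :=
  IsProbabilityMeasure ν ∧
    (∀ g : G, MeasurePreserving (fun p : X × Y => (T g p.1, S g p.2)) ν ν) ∧
    ν.map Prod.fst = μX ∧ ν.map Prod.snd = μY

/-- `f ∈ L²(X, μ)` is almost periodic if the orbit `{f ∘ T^g : g ∈ G}` has compact closure
in the norm topology of `L²(X, μ)`. -/
def AlmostPeriodic (T : G → X → X) (μ : Measure X) (f : Lp ℂ 2 μ) : Prop :=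
  IsCompact (closure {h : Lp ℂ 2 μ | ∃ g : G, (h : X → ℂ) =ᵐ[μ] fun x => f (T g x)})

/-- The joining `ν` projects to the product measure on the product of the Kronecker factors:
almost periodic functions of the two systems are uncorrelated under `ν`. -/
def ProjectsToKroneckerProduct (T : G → X → X) (S : G → Y → Y) (μX : Measure X)
    (μY : Measure Y) (ν : Measure (X × Y)) : Prop :=
  ∀ (f : Lp ℂ 2 μX) (h : Lp ℂ 2 μY), AlmostPeriodic T μX f → AlmostPeriodic S μY h →
    ∫ p, f p.1 * h p.2 ∂ν = (∫ x, f x ∂μX) * (∫ y, h y ∂μY)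

/-- Two `G` systems are quasi-disjoint if the only joining projecting to the product measure
on the product of the Kronecker factors is the product measure. -/
def QuasiDisjoint (T : G → X → X) (S : G → Y → Y) (μX : Measure X) (μY : Measure Y) : Prop :=
  ∀ ν : Measure (X × Y), IsJoining T S μX μY ν →
    ProjectsToKroneckerProduct T S μX μY ν → ν = μX.prod μY

/-- Two `G` systems are disjoint if the product measure is their only joining. -/
def DisjointSystems (T : G → X → X) (S : G → Y → Y) (μX : Measure X) (μY : Measure Y) : Prop :=
  ∀ ν : Measure (X × Y), IsJoining T S μX μY ν → ν = μX.prod μY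

/-- Two `G` systems are Kronecker disjoint if every joining projects to the product measure
on the product of the Kronecker factors. -/
def KroneckerDisjoint (T : G → X → X) (S : G → Y → Y) (μX : Measure X) (μY : Measure Y) :
    Prop :=
  ∀ ν : Measure (X × Y), IsJoining T S μX μY ν → ProjectsToKroneckerProduct T S μX μY ν

/-- A separating sieve for the system `(X, T, μ)`. -/
def HasSeparatingSieve (T : G → X → X) (μ : Measure X) : Prop :=
  ∃ A : ℕ → Set X, (∀ n, MeasurableSet (A n)) ∧ (∀ n, 0 < μ (A n)) ∧
    Tendsto (fun n => μ (A n)) atTop (𝓝 0) ∧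
    ∃ X' : Set X, μ X'ᶜ = 0 ∧
      ∀ x ∈ X', ∀ x' ∈ X', (∀ n : ℕ, ∃ g : G, T g x ∈ A n ∧ T g x' ∈ A n) → x = x'

/-- A factor map of `G` systems: a measurable, almost everywhere `G`-equivariant map
pushing `μX` forward to `μY`. -/
def IsFactorMap (T : G → X → X) (S : G → Y → Y) (μX : Measure X) (μY : Measure Y)
    (π : X → Y) : Prop :=
  Measurable π ∧ μX.map π = μY ∧ ∀ g : G, ∀ᵐ x ∂μX, π (T g x) = S g (π x)

/-- Ergodicity of a `G` system: every invariant Borel set is null or conull. -/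
def ErgodicSystem (T : G → X → X) (μ : Measure X) : Prop :=
  ∀ A : Set X, MeasurableSet A → (∀ g : G, T g ⁻¹' A = A) → μ A = 0 ∨ μ A = 1

end Defs

/-! A joining `ν` of `X` and `Z` pushes forward along `π_n × id` to a joining `ν_n` of `X_n` and
`Z`. Almost periodic functions on `X_n` lift along the factor map to almost periodic functions
on `X`, so `ν_n` inherits from `ν` the property of projecting to the product of the Kronecker
factors, and `ν_n = μ_{X_n} ⊗ μ_Z` by quasi-disjointness. Hence `ν (A × C) = μ_X A · μ_Z C`
whenever `A` is a.e. equal to a `σ(π_n)`-set. As the `σ(π_n)` increase modulo null sets, these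
sets form a π-system, which generates the Borel σ-algebra modulo null sets; since the first
marginal of `ν` is `μ_X`, modifying `A` on a null set does not change `ν (A × C)`, and the π-λ
theorem gives `ν = μ_X ⊗ μ_Z`. -/

section RectangleMeasures

variable {X Z : Type*} [MeasurableSpace X] [MeasurableSpace Z]
  {μ : Measure X} {μZ : Measure Z} {ν : Measure (X × Z)}

theorem measure_prod_congr_of_ae_eq (hfst : ν.map Prod.fst = μ) {A B : Set X}
    (hAB : A =ᵐ[μ] B) (C : Set Z) : ν (A ×ˢ C) = ν (B ×ˢ C) :=
  measure_congr <|
    ((MeasurePreserving.quasiMeasurePreserving ⟨measurable_fst, hfst⟩).preimage_ae_eq hAB).inter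
      (ae_eq_refl (Prod.snd ⁻¹' C))

theorem measure_univ_prod_eq (hsnd : ν.map Prod.snd = μZ) {C : Set Z} (hC : MeasurableSet C) :
    ν (Set.univ ×ˢ C) = μZ C := by
  rw [Set.univ_prod, ← hsnd, Measure.map_apply measurable_snd hC]

variable [IsFiniteMeasure ν] [IsProbabilityMeasure μ] [IsFiniteMeasure μZ]

theorem measure_prod_eq_mul_of_measurableSet_generateFrom (hsnd : ν.map Prod.snd = μZ)
    {P : Set (Set X)} (hP : IsPiSystem P) (hPm : ∀ A ∈ P, MeasurableSet A)
    (hrect : ∀ A ∈ P, ∀ C, MeasurableSet C → ν (A ×ˢ C) = μ A * μZ C)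
    {A : Set X} (hA : MeasurableSet[MeasurableSpace.generateFrom P] A) {C : Set Z}
    (hC : MeasurableSet C) : ν (A ×ˢ C) = μ A * μZ C := by
  have hle : MeasurableSpace.generateFrom P ≤ ‹MeasurableSpace X› :=
    MeasurableSpace.generateFrom_le hPm
  induction A, hA using MeasurableSpace.induction_on_inter rfl hP generalizing C with
  | empty => simp
  | basic A hA => exact hrect A hA C hC
  | compl A hA ih =>
    have hAm : MeasurableSet A := hle A hA
    have hcompl : Aᶜ ×ˢ C = (Set.univ ×ˢ C) \ (A ×ˢ C) := by
      rw [Set.prod_sdiff_prod, Set.sdiff_self, Set.prod_empty, Set.empty_union,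
        Set.compl_eq_univ_sdiff]
    rw [hcompl, measure_sdiff (Set.prod_mono (Set.subset_univ A) le_rfl)
      (hAm.prod hC).nullMeasurableSet (measure_ne_top ν _), measure_univ_prod_eq hsnd hC,
      ih hC, prob_compl_eq_one_sub hAm, ENNReal.sub_mul fun _ _ => measure_ne_top μZ C, one_mul]
  | iUnion A hdisj hA ih =>
    have hAm : ∀ i, MeasurableSet (A i) := fun i => hle _ (hA i)
    have hdisj' : Pairwise (Function.onFun Disjoint fun i => A i ×ˢ C) := fun i j hij =>
      Set.disjoint_prod.2 (.inl (hdisj hij))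
    rw [Set.iUnion_prod_const, measure_iUnion hdisj' fun i => (hAm i).prod hC,
      measure_iUnion hdisj hAm, ← ENNReal.tsum_mul_right]
    exact tsum_congr fun i => ih i hC

theorem eq_prod_of_measure_prod_eq_mul (hfst : ν.map Prod.fst = μ)
    (hsnd : ν.map Prod.snd = μZ) {P : Set (Set X)} (hP : IsPiSystem P)
    (hPm : ∀ A ∈ P, MeasurableSet A)
    (hPgen : ∀ A, MeasurableSet A →
      ∃ B, MeasurableSet[MeasurableSpace.generateFrom P] B ∧ A =ᵐ[μ] B)
    (hrect : ∀ A ∈ P, ∀ C, MeasurableSet C → ν (A ×ˢ C) = μ A * μZ C) :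
    ν = μ.prod μZ := by
  refine (Measure.prod_eq fun A C hA hC => ?_).symm
  obtain ⟨B, hB, hAB⟩ := hPgen A hA
  rw [measure_prod_congr_of_ae_eq hfst hAB, measure_congr hAB,
    measure_prod_eq_mul_of_measurableSet_generateFrom hsnd hP hPm hrect hB hC]

end RectangleMeasures

section AlmostIncreasingSigmaAlgebras

variable {X : Type*} [MeasurableSpace X] {μ : Measure X} {m : ℕ → MeasurableSpace X}

def aeUnionMeasurableSets (μ : Measure X) (m : ℕ → MeasurableSpace X) : Set (Set X) :=
  {A | MeasurableSet A ∧ ∃ n B, MeasurableSet[m n] B ∧ A =ᵐ[μ] B}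

theorem exists_measurableSet_ae_eq_of_le
    (hmono : ∀ n A, MeasurableSet[m n] A →
      ∃ B, MeasurableSet[m (n + 1)] B ∧ μ (symmDiff A B) = 0)
    {n k : ℕ} (hnk : n ≤ k) {A : Set X} (hA : MeasurableSet[m n] A) :
    ∃ B, MeasurableSet[m k] B ∧ A =ᵐ[μ] B := by
  induction k, hnk using Nat.le_induction with
  | base => exact ⟨A, hA, ae_eq_refl A⟩
  | succ k _ ih =>
    obtain ⟨B, hB, hAB⟩ := ih
    obtain ⟨B', hB', hBB'⟩ := hmono k B hB
    exact ⟨B', hB', hAB.trans (measure_symmDiff_eq_zero_iff.1 hBB')⟩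

theorem isPiSystem_aeUnionMeasurableSets
    (hmono : ∀ n A, MeasurableSet[m n] A →
      ∃ B, MeasurableSet[m (n + 1)] B ∧ μ (symmDiff A B) = 0) :
    IsPiSystem (aeUnionMeasurableSets μ m) := by
  rintro A ⟨hA, i, A', hA', hAA'⟩ B ⟨hB, j, B', hB', hBB'⟩ -
  obtain ⟨A'', hA'', hA'A''⟩ :=
    exists_measurableSet_ae_eq_of_le hmono (le_max_left i j) hA'
  obtain ⟨B'', hB'', hB'B''⟩ :=
    exists_measurableSet_ae_eq_of_le hmono (le_max_right i j) hB'
  exact ⟨hA.inter hB, max i j, A'' ∩ B'', hA''.inter hB'',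
    (hAA'.trans hA'A'').inter (hBB'.trans hB'B'')⟩

theorem iSup_le_generateFrom_aeUnionMeasurableSets (hm : ∀ n, m n ≤ ‹MeasurableSpace X›) :
    ⨆ n, m n ≤ MeasurableSpace.generateFrom (aeUnionMeasurableSets μ m) :=
  iSup_le fun n A hA =>
    MeasurableSpace.measurableSet_generateFrom ⟨hm n A hA, n, A, hA, ae_eq_refl A⟩

end AlmostIncreasingSigmaAlgebras

section Factors

open scoped ENNReal

variable {G : Type*} {X Y Z : Type*} [MeasurableSpace X] [MeasurableSpace Y]
  [MeasurableSpace Z] {T : G → X → X} {S : G → Y → Y} {R : G → Z → Z}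
  {μX : Measure X} {μY : Measure Y} {μZ : Measure Z} {π : X → Y} {ν : Measure (X × Z)}

theorem IsFactorMap.measurePreserving (hπ : IsFactorMap T S μX μY π) :
    MeasurePreserving π μX μY :=
  ⟨hπ.1, hπ.2.1⟩

theorem integral_compMeasurePreserving {E : Type*} [NormedAddCommGroup E] [NormedSpace ℝ E]
    {p : ℝ≥0∞} (hπ : MeasurePreserving π μX μY) (f : Lp E p μY) :
    ∫ x, Lp.compMeasurePreserving π hπ f x ∂μX = ∫ y, f y ∂μY := by
  have hmap := integral_map (μ := μX) hπ.measurable.aemeasurable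
    (hπ.map_eq.symm ▸ Lp.aestronglyMeasurable f : AEStronglyMeasurable f (μX.map π))
  rw [hπ.map_eq] at hmap
  rw [integral_congr_ae (Lp.coeFn_compMeasurePreserving f hπ), Function.comp_def, hmap]

theorem IsFactorMap.compMeasurePreserving_comm {E : Type*} [NormedAddCommGroup E] {p : ℝ≥0∞}
    (hπ : IsFactorMap T S μX μY π) {g : G} (hT : MeasurePreserving (T g) μX μX)
    (hS : MeasurePreserving (S g) μY μY) (f : Lp E p μY) :
    Lp.compMeasurePreserving π hπ.measurePreserving (Lp.compMeasurePreserving (S g) hS f) =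
      Lp.compMeasurePreserving (T g) hT (Lp.compMeasurePreserving π hπ.measurePreserving f) := by
  refine Lp.ext ?_
  calc _ =ᵐ[μX] (Lp.compMeasurePreserving (S g) hS f : Y → E) ∘ π :=
        Lp.coeFn_compMeasurePreserving _ _
    _ =ᵐ[μX] (f ∘ S g) ∘ π :=
        hπ.measurePreserving.quasiMeasurePreserving.ae_eq_comp
          (Lp.coeFn_compMeasurePreserving _ _)
    _ =ᵐ[μX] (f ∘ π) ∘ T g := by
        filter_upwards [hπ.2.2 g] with x hx
        simp [hx]
    _ =ᵐ[μX] (Lp.compMeasurePreserving π hπ.measurePreserving f : X → E) ∘ T g :=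
        hT.quasiMeasurePreserving.ae_eq_comp (Lp.coeFn_compMeasurePreserving _ _).symm
    _ =ᵐ[μX] _ := (Lp.coeFn_compMeasurePreserving _ _).symm

theorem setOf_ae_eq_comp_eq_range {E : Type*} [NormedAddCommGroup E] {p : ℝ≥0∞}
    (hS : ∀ g, MeasurePreserving (S g) μY μY) (f : Lp E p μY) :
    {h : Lp E p μY | ∃ g, (h : Y → E) =ᵐ[μY] fun y => f (S g y)} =
      Set.range fun g => Lp.compMeasurePreserving (S g) (hS g) f := by
  ext h
  refine exists_congr fun g => ⟨fun hg => Lp.ext ?_, ?_⟩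
  · exact (Lp.coeFn_compMeasurePreserving f (hS g)).trans hg.symm
  · rintro rfl
    exact Lp.coeFn_compMeasurePreserving f (hS g)

theorem almostPeriodic_iff_isCompact_closure_range (hS : ∀ g, MeasurePreserving (S g) μY μY)
    (f : Lp ℂ 2 μY) :
    AlmostPeriodic S μY f ↔
      IsCompact (closure (Set.range fun g => Lp.compMeasurePreserving (S g) (hS g) f)) := by
  rw [AlmostPeriodic, setOf_ae_eq_comp_eq_range hS]

theorem AlmostPeriodic.compMeasurePreserving (hπ : IsFactorMap T S μX μY π)
    (hT : ∀ g, MeasurePreserving (T g) μX μX) (hS : ∀ g, MeasurePreserving (S g) μY μY)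
    {f : Lp ℂ 2 μY} (hf : AlmostPeriodic S μY f) :
    AlmostPeriodic T μX (Lp.compMeasurePreserving π hπ.measurePreserving f) := by
  rw [almostPeriodic_iff_isCompact_closure_range hS] at hf
  rw [almostPeriodic_iff_isCompact_closure_range hT]
  set ι := Lp.compMeasurePreserving (E := ℂ) (p := 2) π hπ.measurePreserving
  have hι : Continuous ι := (Lp.isometry_compMeasurePreserving hπ.measurePreserving).continuous
  have hrange : (Set.range fun g => Lp.compMeasurePreserving (T g) (hT g) (ι f)) =
      ι '' Set.range fun g => Lp.compMeasurePreserving (S g) (hS g) f := by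
    rw [← Set.range_comp]
    exact congrArg Set.range
      (funext fun g => (hπ.compMeasurePreserving_comm (hT g) (hS g) f).symm)
  rw [hrange, ← image_closure_of_isCompact hf hι.continuousOn]
  exact hf.image hι

theorem map_prodMap_map_fst (hπ : Measurable π) (ν : Measure (X × Z)) :
    (ν.map (Prod.map π id)).map Prod.fst = (ν.map Prod.fst).map π := by
  rw [Measure.map_map measurable_fst (hπ.prodMap measurable_id),
    Measure.map_map hπ measurable_fst, Prod.map_fst']

theorem map_prodMap_map_snd (hπ : Measurable π) (ν : Measure (X × Z)) :
    (ν.map (Prod.map π id)).map Prod.snd = ν.map Prod.snd := by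
  rw [Measure.map_map measurable_snd (hπ.prodMap measurable_id), Prod.map_snd',
    Function.id_comp]

theorem IsJoining.map_prodMap (hν : IsJoining T R μX μZ ν) (hπ : IsFactorMap T S μX μY π)
    (hS : ∀ g, Measurable (S g)) (hR : ∀ g, Measurable (R g)) :
    IsJoining S R μY μZ (ν.map (Prod.map π id)) := by
  obtain ⟨hprob, hinv, hfst, hsnd⟩ := hν
  have hφ : Measurable (Prod.map π id : X × Z → Y × Z) := hπ.1.prodMap measurable_id
  refine ⟨Measure.isProbabilityMeasure_map hφ.aemeasurable, fun g => ?_,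
    by rw [map_prodMap_map_fst hπ.1, hfst, hπ.2.1], by rw [map_prodMap_map_snd hπ.1, hsnd]⟩
  have hψ : Measurable fun q : Y × Z => (S g q.1, R g q.2) := (hS g).prodMap (hR g)
  have hequiv : (fun q : Y × Z => (S g q.1, R g q.2)) ∘ Prod.map π id =ᵐ[ν]
      Prod.map π id ∘ fun q : X × Z => (T g q.1, R g q.2) := by
    filter_upwards [(MeasurePreserving.quasiMeasurePreserving ⟨measurable_fst, hfst⟩).ae
      (hπ.2.2 g)] with q hq
    simp [hq]
  refine ⟨hψ, ?_⟩
  rw [Measure.map_map hψ hφ, Measure.map_congr hequiv,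
    ← Measure.map_map hφ (hinv g).measurable, (hinv g).map_eq]

theorem ProjectsToKroneckerProduct.map_prodMap (hK : ProjectsToKroneckerProduct T R μX μZ ν)
    (hfst : ν.map Prod.fst = μX) (hsnd : ν.map Prod.snd = μZ) (hπ : IsFactorMap T S μX μY π)
    (hT : ∀ g, MeasurePreserving (T g) μX μX) (hS : ∀ g, MeasurePreserving (S g) μY μY) :
    ProjectsToKroneckerProduct S R μY μZ (ν.map (Prod.map π id)) := by
  intro f h hf hh
  set F := Lp.compMeasurePreserving π hπ.measurePreserving f
  have hF : (F : X → ℂ) =ᵐ[μX] f ∘ π := Lp.coeFn_compMeasurePreserving f _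
  have hφ : Measurable (Prod.map π id : X × Z → Y × Z) := hπ.1.prodMap measurable_id
  have hfst' : (ν.map (Prod.map π id)).map Prod.fst = μY := by
    rw [map_prodMap_map_fst hπ.1, hfst, hπ.2.1]
  have hsnd' : (ν.map (Prod.map π id)).map Prod.snd = μZ := by
    rw [map_prodMap_map_snd hπ.1, hsnd]
  have hmeas : AEStronglyMeasurable (fun q : Y × Z => f q.1 * h q.2) (ν.map (Prod.map π id)) :=
    ((Lp.aestronglyMeasurable f).comp_quasiMeasurePreserving
        (MeasurePreserving.quasiMeasurePreserving ⟨measurable_fst, hfst'⟩)).mul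
      ((Lp.aestronglyMeasurable h).comp_quasiMeasurePreserving
        (MeasurePreserving.quasiMeasurePreserving ⟨measurable_snd, hsnd'⟩))
  have hpair : ∫ q, f q.1 * h q.2 ∂ν.map (Prod.map π id) = ∫ q, F q.1 * h q.2 ∂ν := by
    rw [integral_map hφ.aemeasurable hmeas]
    refine integral_congr_ae ?_
    filter_upwards [(MeasurePreserving.quasiMeasurePreserving ⟨measurable_fst, hfst⟩).ae hF]
      with q hq
    simp [hq]
  rw [hpair, hK F h (hf.compMeasurePreserving hπ hT hS) hh,
    integral_compMeasurePreserving hπ.measurePreserving]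

theorem QuasiDisjoint.measure_preimage_prod [SFinite μZ] (hQD : QuasiDisjoint S R μY μZ)
    (hν : IsJoining T R μX μZ ν) (hK : ProjectsToKroneckerProduct T R μX μZ ν)
    (hπ : IsFactorMap T S μX μY π) (hT : ∀ g, MeasurePreserving (T g) μX μX)
    (hS : ∀ g, MeasurePreserving (S g) μY μY) (hR : ∀ g, Measurable (R g))
    {B : Set Y} (hB : MeasurableSet B) {C : Set Z} (hC : MeasurableSet C) :
    ν ((π ⁻¹' B) ×ˢ C) = μX (π ⁻¹' B) * μZ C := by
  have hprod : ν.map (Prod.map π id) = μY.prod μZ :=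
    hQD _ (hν.map_prodMap hπ (fun g => (hS g).measurable) hR)
      (hK.map_prodMap hν.2.2.1 hν.2.2.2 hπ hT hS)
  calc ν ((π ⁻¹' B) ×ˢ C) = ν.map (Prod.map π id) (B ×ˢ C) := by
        rw [Measure.map_apply (hπ.1.prodMap measurable_id) (hB.prod hC),
          Set.preimage_prod_map_prod, Set.preimage_id]
    _ = μY B * μZ C := by rw [hprod, Measure.prod_prod]
    _ = μX (π ⁻¹' B) * μZ C := by rw [← hπ.2.1, Measure.map_apply hπ.1 hB]

end Factors

theorem quasi_disjointness_preserved_under_inverse_limits_general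
    {G : Type*}
    {X : Type*} [MeasurableSpace X]
    {Z : Type*} [MeasurableSpace Z]
    (T : G → X → X)
    (μX : Measure X) (hXprob : IsProbabilityMeasure μX)
    (hTμ : ∀ g, MeasurePreserving (T g) μX μX)
    (R : G → Z → Z)
    (μZ : Measure Z) (hZprob : IsProbabilityMeasure μZ)
    (hRμ : ∀ g, MeasurePreserving (R g) μZ μZ)
    -- the sequence of systems `X_n`
    (Xn : ℕ → Type*)
    [∀ n, MeasurableSpace (Xn n)]
    (Tn : ∀ n, G → Xn n → Xn n)
    (μn : ∀ n, Measure (Xn n))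
    (hTnμ : ∀ n g, MeasurePreserving (Tn n g) (μn n) (μn n))
    -- the factor maps realizing `X` as the inverse limit of the `X_n`
    (πn : ∀ n, X → Xn n)
    (hπn : ∀ n, IsFactorMap T (Tn n) μX (μn n) (πn n))
    (hmono : ∀ (n : ℕ) (A : Set X),
      MeasurableSet[MeasurableSpace.comap (πn n) inferInstance] A →
      ∃ B : Set X, MeasurableSet[MeasurableSpace.comap (πn (n + 1)) inferInstance] B ∧
        μX (symmDiff A B) = 0)
    (hgen : ∀ A : Set X, MeasurableSet A →
      ∃ B : Set X, MeasurableSet[⨆ n, MeasurableSpace.comap (πn n) inferInstance] B ∧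
        μX (symmDiff A B) = 0)
    (hQD : ∀ n, QuasiDisjoint (Tn n) R (μn n) μZ) :
    QuasiDisjoint T R μX μZ := by
  intro ν hν hK
  have ⟨_, _, hfst, hsnd⟩ := hν
  have hcomap_le : ∀ n, MeasurableSpace.comap (πn n) inferInstance ≤ ‹MeasurableSpace X› :=
    fun n => (hπn n).1.comap_le
  refine eq_prod_of_measure_prod_eq_mul hfst hsnd (isPiSystem_aeUnionMeasurableSets hmono)
    (fun A hA => hA.1) (fun A hA => ?_) ?_
  · obtain ⟨B, hB, hAB⟩ := hgen A hA
    exact ⟨B, iSup_le_generateFrom_aeUnionMeasurableSets hcomap_le B hB,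
      measure_symmDiff_eq_zero_iff.1 hAB⟩
  · rintro A ⟨-, n, -, ⟨B, hB, rfl⟩, hAB⟩ C hC
    rw [measure_prod_congr_of_ae_eq hfst hAB, measure_congr hAB,
      QuasiDisjoint.measure_preimage_prod (hQD n) hν hK (hπn n) hTμ (hTnμ n)
        (fun g => (hRμ g).measurable) hB hC]

/-- Quasi-disjointness is preserved under inverse limits: if `X` is the
inverse limit of factors `X_n` (the σ-algebras `σ(π_n)` increase up to null sets and their
union generates the Borel σ-algebra of `X` up to null sets), and each `X_n` is quasi-disjoint
from `Z`, then `X` is quasi-disjoint from `Z`. -/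
theorem quasi_disjointness_preserved_under_inverse_limits
    {G : Type*} [Group G] [Countable G]
    {X : Type*} [MetricSpace X] [CompactSpace X] [MeasurableSpace X] [BorelSpace X]
    {Z : Type*} [MetricSpace Z] [CompactSpace Z] [MeasurableSpace Z] [BorelSpace Z]
    (T : G → X → X) (hT1 : ∀ x, T 1 x = x)
    (hTmul : ∀ g h x, T (g * h) x = T g (T h x))
    (hTcont : ∀ g, Continuous (T g))
    (μX : Measure X) (hXprob : IsProbabilityMeasure μX)
    (hTμ : ∀ g, MeasurePreserving (T g) μX μX)
    (R : G → Z → Z) (hR1 : ∀ z, R 1 z = z)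
    (hRmul : ∀ g h z, R (g * h) z = R g (R h z))
    (hRcont : ∀ g, Continuous (R g))
    (μZ : Measure Z) (hZprob : IsProbabilityMeasure μZ)
    (hRμ : ∀ g, MeasurePreserving (R g) μZ μZ)
    -- the sequence of systems `X_n`
    (Xn : ℕ → Type*) [∀ n, MetricSpace (Xn n)] [∀ n, CompactSpace (Xn n)]
    [∀ n, MeasurableSpace (Xn n)] [∀ n, BorelSpace (Xn n)]
    (Tn : ∀ n, G → Xn n → Xn n)
    (hTn1 : ∀ n x, Tn n 1 x = x)
    (hTnmul : ∀ n g h x, Tn n (g * h) x = Tn n g (Tn n h x))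
    (hTncont : ∀ n g, Continuous (Tn n g))
    (μn : ∀ n, Measure (Xn n)) (hprobn : ∀ n, IsProbabilityMeasure (μn n))
    (hTnμ : ∀ n g, MeasurePreserving (Tn n g) (μn n) (μn n))
    -- the factor maps realizing `X` as the inverse limit of the `X_n`
    (πn : ∀ n, X → Xn n)
    (hπn : ∀ n, IsFactorMap T (Tn n) μX (μn n) (πn n))
    (hmono : ∀ (n : ℕ) (A : Set X),
      MeasurableSet[MeasurableSpace.comap (πn n) inferInstance] A →
      ∃ B : Set X, MeasurableSet[MeasurableSpace.comap (πn (n + 1)) inferInstance] B ∧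
        μX (symmDiff A B) = 0)
    (hgen : ∀ A : Set X, MeasurableSet A →
      ∃ B : Set X, MeasurableSet[⨆ n, MeasurableSpace.comap (πn n) inferInstance] B ∧
        μX (symmDiff A B) = 0)
    (hQD : ∀ n, QuasiDisjoint (Tn n) R (μn n) μZ) :
    QuasiDisjoint T R μX μZ :=
  quasi_disjointness_preserved_under_inverse_limits_general T μX hXprob hTμ R μZ hZprob hRμ Xn Tn μn
    hTnμ πn hπn hmono hgen hQD
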